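/- The family of context-free languages is properly contained in the family SC(1,1) of languages generated by nonerasing semi-conditional grammars of degree (1,1). -/

import Mathlib

/-- Symbols: nonterminals `N` plus terminals `T`. -/
abbrev Symb (N T : Type) := N ⊕ T

/-- `alph w` is the set of symbols occurring in the string `w`. -/
def alph {α : Type} (w : List α) : Set α := {a | a ∈ w}

/-- A (nonerasing) random context grammar: finitely many productions
`(A → x, Per, For)` with `A ∈ N`, `x ∈ (N ∪ T)⁺`, `Per, For ⊆ N`. -/
structure RCG (N T : Type) where
  rules : Set (N × List (Symb N T) × Set N × Set N)
  fin : rules.Finite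
  ne : ∀ r ∈ rules, r.2.1 ≠ []
  start : N

/-- One derivation step of a random context grammar.  The flag `incl` tells whether
the rewritten symbol is included in the context check (`true`: conditions checked
against `alph (uAv)`; `false`: against `alph (uv)`). -/
def RCG.Step {N T : Type} (G : RCG N T) (incl : Bool)
    (s₁ s₂ : List (Symb N T)) : Prop :=
  ∃ A x Per For u v, (A, x, Per, For) ∈ G.rules ∧
    s₁ = u ++ Sum.inl A :: v ∧ s₂ = u ++ x ++ v ∧
    (∀ B ∈ Per, Sum.inl B ∈ alph (if incl then s₁ else u ++ v)) ∧
    (∀ B ∈ For, Sum.inl B ∉ alph (if incl then s₁ else u ++ v))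

/-- The language of a random context grammar (under the chosen derivation definition). -/
def RCG.Lang {N T : Type} (G : RCG N T) (incl : Bool) : Set (List T) :=
  {w | Relation.ReflTransGen (G.Step incl) [Sum.inl G.start] (w.map Sum.inr)}

/-- The family of random context languages over terminal alphabet `T`
(standard definition: rewritten symbol excluded from the context check). -/
def RC (T : Type) : Set (Set (List T)) :=
  {L | ∃ (N : Type) (G : RCG N T), G.Lang false = L}

/-- A (nonerasing) semi-conditional grammar of degree (1,1): productions
`(A → x, Per, For)` with `Per, For ⊆ N ∪ T` of cardinality at most one. -/
structure SCG (N T : Type) where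
  rules : Set (N × List (Symb N T) × Set (Symb N T) × Set (Symb N T))
  fin : rules.Finite
  ne : ∀ r ∈ rules, r.2.1 ≠ []
  per1 : ∀ r ∈ rules, r.2.2.1.Subsingleton
  for1 : ∀ r ∈ rules, r.2.2.2.Subsingleton
  start : N

/-- One derivation step of a semi-conditional grammar; `incl` as in `RCG.Step`. -/
def SCG.Step {N T : Type} (G : SCG N T) (incl : Bool)
    (s₁ s₂ : List (Symb N T)) : Prop :=
  ∃ A x Per For u v, (A, x, Per, For) ∈ G.rules ∧
    s₁ = u ++ Sum.inl A :: v ∧ s₂ = u ++ x ++ v ∧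
    Per ⊆ alph (if incl then s₁ else u ++ v) ∧
    (∀ a ∈ For, a ∉ alph (if incl then s₁ else u ++ v))

/-- The language of a semi-conditional grammar. -/
def SCG.Lang {N T : Type} (G : SCG N T) (incl : Bool) : Set (List T) :=
  {w | Relation.ReflTransGen (G.Step incl) [Sum.inl G.start] (w.map Sum.inr)}

/-- The family SC(1,1): inclusive derivation definition (context `alph (uAv)`). -/
def SC11 (T : Type) : Set (Set (List T)) :=
  {L | ∃ (N : Type) (G : SCG N T), G.Lang true = L}

/-- The family SC'(1,1): exclusive derivation definition (context `alph (uv)`). -/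
def SC11' (T : Type) : Set (Set (List T)) :=
  {L | ∃ (N : Type) (G : SCG N T), G.Lang false = L}

/-- The family of (nonerasing) context-free languages over `T`: languages of random
context grammars in which all permitting and forbidding sets are empty (for such
grammars the derivation relation is the context-free one). -/
def CFfam (T : Type) : Set (Set (List T)) :=
  {L | ∃ (N : Type) (G : RCG N T),
    (∀ r ∈ G.rules, r.2.2.1 = ∅ ∧ r.2.2.2 = ∅) ∧ G.Lang false = L}


/-!
Every context-free grammar is a semi-conditional grammar with empty contexts.

The language `{a ^ (2 ^ n + 1) | n ≥ 1}` lies in SC(1,1): a marker alternates between `P₂`, which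
permits turning each `B` into `A`, and `P₁`, which permits turning each `A` into `B B`; the marker
may only change once the symbols of the current phase are gone (forbidding contexts). The marker
`F` then permits turning each `A` into `a` and finally becomes an `a` itself.

The language is not context-free: its length set is unbounded but contains no rectangle
`x, x + d, x + d', x + d + d'` with `d, d' > 0`. For a context-free grammar with a rectangle-free
length set, a sentential form reachable from the start symbol in a terminating context has at most
one symbol with two different yields, and no such nonterminal `A` derives `u A v` with `u v`
yielding a positive length. Following that unique symbol down a derivation, every step that adds a
positive length (bounded in terms of the grammar) strictly shrinks the finite set of nonterminals
embeddable below it, so the lengths of the language are bounded.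
-/

open scoped Pointwise

def RectangleFree (E : Set ℕ) : Prop :=
  ∀ x d d', 0 < d → 0 < d' → x ∈ E → x + d ∈ E → x + d' ∈ E → x + d + d' ∉ E

theorem RectangleFree.not_add_subset {E Y Z : Set ℕ} (hE : RectangleFree E) (hY : Y.Nontrivial)
    (hZ : Z.Nontrivial) : ¬ Y + Z ⊆ E := by
  intro h
  obtain ⟨y, hy, y', hy', hyy⟩ := hY.exists_lt
  obtain ⟨z, hz, z', hz', hzz⟩ := hZ.exists_lt
  have mem {a b : ℕ} (ha : a ∈ Y) (hb : b ∈ Z) (n : ℕ) (hn : a + b = n) : n ∈ E :=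
    hn ▸ h (Set.add_mem_add ha hb)
  exact hE (y + z) (y' - y) (z' - z) (by omega) (by omega) (mem hy hz _ rfl)
    (mem hy' hz _ (by omega)) (mem hy hz' _ (by omega)) (mem hy' hz' _ (by omega))

theorem rectangleFree_two_pow_add_one : RectangleFree {m | ∃ n, 1 ≤ n ∧ m = 2 ^ n + 1} := by
  rintro _ d d' hd hd' ⟨a, -, rfl⟩ ⟨b, -, hb⟩ ⟨c, -, hc⟩ ⟨e, -, he⟩
  -- `2 ^ a + 2 ^ e = 2 ^ b + 2 ^ c` with `a` the smallest exponent: `2 ^ (a + 1)` divides all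
  -- of these powers except `2 ^ a`.
  have hpow {j : ℕ} (h : 2 ^ a < 2 ^ j) : 2 ^ (a + 1) ∣ 2 ^ j :=
    pow_dvd_pow 2 ((Nat.pow_lt_pow_iff_right (by norm_num)).1 h)
  have hsum : 2 ^ (a + 1) ∣ 2 ^ a + 2 ^ e := by
    rw [show 2 ^ a + 2 ^ e = 2 ^ b + 2 ^ c by omega]
    exact dvd_add (hpow (by omega)) (hpow (by omega))
  have := (Nat.pow_dvd_pow_iff_le_right (by norm_num)).1
    ((Nat.dvd_add_left (hpow (by omega))).1 hsum)
  omega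

theorem image_length_setOf {α : Type} [Inhabited α] (p : ℕ → Prop) :
    List.length '' {w : List α | p w.length} = {m | p m} := by
  ext m
  exact ⟨fun ⟨w, hw, hm⟩ => hm ▸ hw,
    fun hm => ⟨List.replicate m default, by simpa using hm, by simp⟩⟩

theorem not_bddAbove_two_pow_add_one : ¬ BddAbove {m | ∃ n, 1 ≤ n ∧ m = 2 ^ n + 1} := by
  rw [not_bddAbove_iff]
  exact fun x => ⟨2 ^ (x + 1) + 1, ⟨x + 1, by omega, rfl⟩,
    by have := Nat.lt_two_pow_self (n := x + 1); omega⟩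

theorem reflTransGen_of_transfer {α : Type} {R : α → α → Prop} (f : ℕ → ℕ → α) (c : ℕ)
    (h : ∀ i j, R (f (i + 1) j) (f i (j + c))) (i j : ℕ) :
    Relation.ReflTransGen R (f i j) (f 0 (j + c * i)) := by
  induction i generalizing j with
  | zero => rfl
  | succ i ih => exact .head (h i j) (by simpa [mul_add, add_assoc, add_comm c] using ih (j + c))

namespace RCG

variable {N T : Type}

variable (G : RCG N T) in
def CFStep (s t : List (Symb N T)) : Prop :=
  ∃ A x P F u v, (A, x, P, F) ∈ G.rules ∧ s = u ++ Sum.inl A :: v ∧ t = u ++ x ++ v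

variable (G : RCG N T) in
abbrev CFDerives : List (Symb N T) → List (Symb N T) → Prop :=
  Relation.ReflTransGen G.CFStep

variable (G : RCG N T) in
def CFDerivesIn : ℕ → List (Symb N T) → List (Symb N T) → Prop
  | 0, s, t => s = t
  | n + 1, s, t => ∃ s', G.CFStep s s' ∧ CFDerivesIn n s' t

variable (G : RCG N T) in
def toSCG : SCG N T where
  rules := (fun r => (r.1, r.2.1, ∅, ∅)) '' G.rules
  fin := G.fin.image _
  ne := by
    rintro _ ⟨r, hr, rfl⟩
    exact G.ne r hr
  per1 := by
    rintro _ ⟨r, -, rfl⟩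
    exact Set.subsingleton_empty
  for1 := by
    rintro _ ⟨r, -, rfl⟩
    exact Set.subsingleton_empty
  start := G.start

variable {G : RCG N T} {s t r : List (Symb N T)}

theorem step_eq_cfStep (hG : ∀ r ∈ G.rules, r.2.2.1 = ∅ ∧ r.2.2.2 = ∅) (incl : Bool) :
    G.Step incl = G.CFStep := by
  ext s t
  constructor
  · rintro ⟨A, x, P, F, u, v, hr, hs, ht, -, -⟩
    exact ⟨A, x, P, F, u, v, hr, hs, ht⟩
  · rintro ⟨A, x, P, F, u, v, hr, hs, ht⟩
    obtain ⟨rfl, rfl⟩ := hG _ hr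
    exact ⟨A, x, ∅, ∅, u, v, hr, hs, ht, Set.empty_subset _, fun _ h => h.elim⟩

theorem toSCG_step (incl : Bool) : G.toSCG.Step incl = G.CFStep := by
  ext s t
  constructor
  · rintro ⟨A, x, -, -, u, v, ⟨⟨A, x, P, F⟩, hr, ⟨⟩⟩, hs, ht, -, -⟩
    exact ⟨A, x, P, F, u, v, hr, hs, ht⟩
  · rintro ⟨A, x, P, F, u, v, hr, hs, ht⟩
    exact ⟨A, x, ∅, ∅, u, v, ⟨_, hr, rfl⟩, hs, ht, Set.empty_subset _, fun _ h => h.elim⟩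

theorem CFStep.append (h : G.CFStep s t) (p q : List (Symb N T)) :
    G.CFStep (p ++ s ++ q) (p ++ t ++ q) := by
  obtain ⟨A, x, P, F, u, v, hr, rfl, rfl⟩ := h
  exact ⟨A, x, P, F, p ++ u, v ++ q, hr, by simp, by simp⟩

theorem CFStep.of_append (h : G.CFStep (s ++ t) r) :
    (∃ s', G.CFStep s s' ∧ r = s' ++ t) ∨ (∃ t', G.CFStep t t' ∧ r = s ++ t') := by
  obtain ⟨A, x, P, F, u, v, hr, hst, rfl⟩ := h
  rcases List.append_eq_append_iff.1 hst with ⟨a, rfl, rfl⟩ | ⟨_ | ⟨σ, c⟩, rfl, hc⟩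
  · exact .inr ⟨a ++ x ++ v, ⟨A, x, P, F, a, v, hr, rfl, rfl⟩, by simp⟩
  · exact .inr ⟨x ++ v, ⟨A, x, P, F, [], v, hr, by simpa using hc.symm, rfl⟩, by simp⟩
  · obtain ⟨rfl, rfl⟩ := List.cons_eq_cons.1 hc
    exact .inl ⟨u ++ x ++ c, ⟨A, x, P, F, u, c, hr, rfl, rfl⟩, by simp⟩

theorem CFDerives.append {s₁ t₁ s₂ t₂ : List (Symb N T)} (h₁ : G.CFDerives s₁ t₁)
    (h₂ : G.CFDerives s₂ t₂) : G.CFDerives (s₁ ++ s₂) (t₁ ++ t₂) :=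
  (h₁.lift (· ++ s₂) fun _ _ h => by simpa using h.append [] s₂).trans
    (h₂.lift (t₁ ++ ·) fun _ _ h => by simpa using h.append t₁ [])

theorem cfDerives_iff_exists_cfDerivesIn : G.CFDerives s t ↔ ∃ n, G.CFDerivesIn n s t := by
  constructor
  · intro h
    induction h using Relation.ReflTransGen.head_induction_on with
    | refl => exact ⟨0, rfl⟩
    | head hstep _ ih =>
      obtain ⟨n, hn⟩ := ih
      exact ⟨n + 1, _, hstep, hn⟩
  · rintro ⟨n, h⟩
    induction n generalizing s with
    | zero => exact h ▸ .refl
    | succ n ih =>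
      obtain ⟨s', hs, hd⟩ := h
      exact .head hs (ih hd)

theorem CFDerivesIn.split : ∀ {n : ℕ} {s t r : List (Symb N T)}, G.CFDerivesIn n (s ++ t) r →
    ∃ n₁ n₂ r₁ r₂, n₁ + n₂ = n ∧ r = r₁ ++ r₂ ∧ G.CFDerivesIn n₁ s r₁ ∧ G.CFDerivesIn n₂ t r₂
  | 0, s, t, _, rfl => ⟨0, 0, s, t, rfl, rfl, rfl, rfl⟩
  | n + 1, s, t, r, ⟨_, hstep, hd⟩ => by
    rcases hstep.of_append with ⟨s', hs, rfl⟩ | ⟨t', ht, rfl⟩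
    · obtain ⟨n₁, n₂, r₁, r₂, hn, rfl, h₁, h₂⟩ := hd.split
      exact ⟨n₁ + 1, n₂, r₁, r₂, by omega, rfl, ⟨s', hs, h₁⟩, h₂⟩
    · obtain ⟨n₁, n₂, r₁, r₂, hn, rfl, h₁, h₂⟩ := hd.split
      exact ⟨n₁, n₂ + 1, r₁, r₂, by omega, rfl, h₁, ⟨t', ht, h₂⟩⟩

theorem CFDerives.split (h : G.CFDerives (s ++ t) r) :
    ∃ r₁ r₂, r = r₁ ++ r₂ ∧ G.CFDerives s r₁ ∧ G.CFDerives t r₂ := by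
  obtain ⟨n, hn⟩ := cfDerives_iff_exists_cfDerivesIn.1 h
  obtain ⟨n₁, n₂, r₁, r₂, -, rfl, h₁, h₂⟩ := hn.split
  exact ⟨r₁, r₂, rfl, cfDerives_iff_exists_cfDerivesIn.2 ⟨n₁, h₁⟩,
    cfDerives_iff_exists_cfDerivesIn.2 ⟨n₂, h₂⟩⟩

theorem CFDerivesIn.of_singleton {n : ℕ} {A : N} (h : G.CFDerivesIn (n + 1) [Sum.inl A] r) :
    ∃ x P F, (A, x, P, F) ∈ G.rules ∧ G.CFDerivesIn n x r := by
  obtain ⟨_, ⟨B, x, P, F, u, v, hr, hs, rfl⟩, hd⟩ := h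
  rcases u with _ | ⟨σ, u⟩
  · obtain ⟨rfl, rfl⟩ : A = B ∧ v = [] := by simpa [eq_comm] using hs
    exact ⟨x, P, F, hr, by simpa using hd⟩
  · simp at hs

theorem cfDerives_map_inr {w : List T} (h : G.CFDerives (w.map Sum.inr) t) :
    t = w.map Sum.inr := by
  induction h with
  | refl => rfl
  | tail _ hstep ih =>
    obtain ⟨A, x, P, F, u, v, -, hs, -⟩ := hstep
    have : Sum.inl A ∈ w.map Sum.inr := by simp [← ih, hs]
    simp at this

variable (G) in
def yields (s : List (Symb N T)) : Set ℕ :=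
  {m | ∃ w : List T, w.length = m ∧ G.CFDerives s (w.map Sum.inr)}

theorem yields_subset_of_cfDerives (h : G.CFDerives s t) : G.yields t ⊆ G.yields s :=
  fun _ ⟨w, hw, ht⟩ => ⟨w, hw, h.trans ht⟩

theorem yields_map_inr (w : List T) : G.yields (w.map Sum.inr) = {w.length} := by
  ext m
  constructor
  · rintro ⟨w', rfl, h⟩
    rw [List.map_injective_iff.2 Sum.inr_injective (cfDerives_map_inr h)]
    rfl
  · rintro rfl
    exact ⟨w, rfl, .refl⟩

theorem yields_append (s t : List (Symb N T)) : G.yields (s ++ t) = G.yields s + G.yields t := by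
  ext m
  constructor
  · rintro ⟨w, rfl, h⟩
    obtain ⟨r₁, r₂, hr, h₁, h₂⟩ := h.split
    obtain ⟨w₁, w₂, rfl, rfl, rfl⟩ := List.map_eq_append_iff.1 hr
    exact ⟨_, ⟨w₁, rfl, h₁⟩, _, ⟨w₂, rfl, h₂⟩, by simp⟩
  · rintro ⟨_, ⟨w₁, rfl, h₁⟩, _, ⟨w₂, rfl, h₂⟩, rfl⟩
    exact ⟨w₁ ++ w₂, by simp, by simpa using h₁.append h₂⟩

theorem yields_append_cons (s t : List (Symb N T)) (σ : Symb N T) :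
    G.yields (s ++ σ :: t) = G.yields [σ] + G.yields (s ++ t) := by
  rw [← List.singleton_append, yields_append, yields_append, yields_append, add_left_comm]

theorem subsingleton_yields_of_forall (h : ∀ σ ∈ s, (G.yields [σ]).Subsingleton) :
    (G.yields s).Subsingleton := by
  induction s with
  | nil =>
    rw [show ([] : List (Symb N T)) = ([] : List T).map Sum.inr from rfl, yields_map_inr]
    exact Set.subsingleton_singleton
  | cons σ s ih =>
    rw [← List.singleton_append, yields_append, ← Set.image2_add]
    exact (h σ (by simp)).image2 (ih fun τ hτ => h τ (by simp [hτ])) _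

theorem exists_eq_inl_of_nontrivial {σ : Symb N T} (h : (G.yields [σ]).Nontrivial) :
    ∃ A, σ = Sum.inl A := by
  rcases σ with A | a
  · exact ⟨A, rfl⟩
  · rw [show [Sum.inr a] = [a].map Sum.inr from rfl, yields_map_inr] at h
    exact absurd h (Set.not_nontrivial_singleton)

variable (G) in
def Embeds (A B : N) (c : ℕ) : Prop :=
  ∃ u v, G.CFDerives [Sum.inl A] (u ++ Sum.inl B :: v) ∧ c ∈ G.yields (u ++ v)

theorem Embeds.refl (A : N) : G.Embeds A A 0 := ⟨[], [], .refl, [], rfl, .refl⟩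

theorem Embeds.of_mem_rules {A B : N} {α β : List (Symb N T)} {P F : Set N} {g : ℕ}
    (hr : (A, α ++ Sum.inl B :: β, P, F) ∈ G.rules) (hg : g ∈ G.yields (α ++ β)) :
    G.Embeds A B g :=
  ⟨α, β, .single ⟨A, _, P, F, [], [], hr, rfl, by simp⟩, hg⟩

theorem Embeds.add_mem_yields {A B : N} {c m : ℕ} (h : G.Embeds A B c)
    (hm : m ∈ G.yields [Sum.inl B]) : c + m ∈ G.yields [Sum.inl A] := by
  obtain ⟨u, v, hd, hc⟩ := h
  apply yields_subset_of_cfDerives hd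
  rw [yields_append_cons, add_comm c]
  exact Set.add_mem_add hm hc

theorem Embeds.trans {A B C : N} {c d : ℕ} (h₁ : G.Embeds A B c) (h₂ : G.Embeds B C d) :
    G.Embeds A C (c + d) := by
  obtain ⟨u, v, hd₁, hc⟩ := h₁
  obtain ⟨u', v', hd₂, hd⟩ := h₂
  refine ⟨u ++ u', v' ++ v, hd₁.trans ?_, ?_⟩
  · simpa using CFDerives.append (.refl : G.CFDerives u u) (hd₂.append .refl)
  · have : G.yields (u ++ u' ++ (v' ++ v)) =
        (G.yields u + G.yields v) + (G.yields u' + G.yields v') := by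
      simp only [yields_append]
      abel
    rw [yields_append] at hc hd
    exact this ▸ Set.add_mem_add hc hd

variable (G) in
def reach (A : N) : Set N := {B | B ∈ Prod.fst '' G.rules ∧ ∃ c, G.Embeds A B c}

theorem reach_finite (A : N) : (G.reach A).Finite :=
  (G.fin.image Prod.fst).subset fun _ h => h.1

theorem reach_subset_of_embeds {A B : N} {g : ℕ} (h : G.Embeds A B g) : G.reach B ⊆ G.reach A :=
  fun _ ⟨hC, c, hc⟩ => ⟨hC, g + c, h.trans hc⟩

theorem subsingleton_yields_of_nontrivial (hE : RectangleFree (G.yields [Sum.inl G.start]))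
    {A : N} {c : ℕ} {σ : Symb N T}
    (hA : G.Embeds G.start A c) (hd : G.CFDerives [Sum.inl A] (s ++ σ :: t))
    (hσ : (G.yields [σ]).Nontrivial) : (G.yields (s ++ t)).Subsingleton := by
  rw [← Set.not_nontrivial_iff]
  refine fun hst => hE.not_add_subset (hσ.add_left (Set.singleton_nonempty c)) hst ?_
  rintro _ ⟨_, ⟨_, rfl, y, hy, rfl⟩, z, hz, rfl⟩
  dsimp only
  rw [add_assoc]
  refine hA.add_mem_yields (yields_subset_of_cfDerives hd ?_)
  rw [yields_append_cons]
  exact Set.add_mem_add hy hz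

theorem not_embeds_self (hE : RectangleFree (G.yields [Sum.inl G.start]))
    {A : N} {c g y : ℕ} (hA : G.Embeds G.start A c)
    (hy : y ∈ G.yields [Sum.inl A]) (hg : G.Embeds A A g) (hg0 : 0 < g) : False := by
  have h₁ := hg.add_mem_yields hy
  have h₂ := hg.add_mem_yields h₁
  refine hE (c + y) g g hg0 hg0 (hA.add_mem_yields hy) ?_ ?_ ?_
  · rw [show c + y + g = c + (g + y) by ring]
    exact hA.add_mem_yields h₁
  · rw [show c + y + g = c + (g + y) by ring]
    exact hA.add_mem_yields h₁
  · rw [show c + y + g + g = c + (g + (g + y)) by ring]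
    exact hA.add_mem_yields h₂

theorem ncard_reach_lt (hE : RectangleFree (G.yields [Sum.inl G.start]))
    {A B : N} {c g y : ℕ} (hA : G.Embeds G.start A c)
    (hAl : A ∈ Prod.fst '' G.rules) (hy : y ∈ G.yields [Sum.inl A]) (hAB : G.Embeds A B g)
    (hg : 0 < g) : (G.reach B).ncard < (G.reach A).ncard := by
  refine Set.ncard_lt_ncard ⟨reach_subset_of_embeds hAB, fun h => ?_⟩ (reach_finite A)
  obtain ⟨-, c', hc'⟩ := h ⟨hAl, 0, .refl A⟩
  exact not_embeds_self hE hA hy (hAB.trans hc') (by omega)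

theorem CFDerivesIn.split_cons_map_inr {n : ℕ} {α β : List (Symb N T)} {σ : Symb N T}
    {w : List T} (h : G.CFDerivesIn n (α ++ σ :: β) (w.map Sum.inr)) :
    ∃ (k : ℕ) (v : List T) (g : ℕ), k ≤ n ∧ G.CFDerivesIn k [σ] (v.map Sum.inr) ∧
      g ∈ G.yields (α ++ β) ∧ w.length = g + v.length := by
  obtain ⟨n₁, n₂, r₁, r₂, hn, hr, h₁, h₂⟩ := h.split
  obtain ⟨w₁, w₂, rfl, rfl, rfl⟩ := List.map_eq_append_iff.1 hr
  obtain ⟨n₃, n₄, r₃, r₄, hn', hr', h₃, h₄⟩ := CFDerivesIn.split (s := [σ]) h₂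
  obtain ⟨v, w₄, rfl, rfl, rfl⟩ := List.map_eq_append_iff.1 hr'
  refine ⟨n₃, v, w₁.length + w₄.length, by omega, h₃, ?_, by simp; omega⟩
  rw [yields_append]
  exact Set.add_mem_add ⟨w₁, rfl, cfDerives_iff_exists_cfDerivesIn.2 ⟨n₁, h₁⟩⟩
    ⟨w₄, rfl, cfDerives_iff_exists_cfDerivesIn.2 ⟨n₄, h₄⟩⟩

theorem le_sInf_yields_of_subsingleton {α β : List (Symb N T)} {σ : Symb N T} {g : ℕ}
    (hαβ : (G.yields (α ++ β)).Subsingleton) (hg : g ∈ G.yields (α ++ β))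
    (hne : (G.yields (α ++ σ :: β)).Nonempty) : g ≤ sInf (G.yields (α ++ σ :: β)) := by
  have hmin := Nat.sInf_mem hne
  rw [yields_append_cons] at hmin ⊢
  obtain ⟨b, -, g', hg', hb : b + g' = _⟩ := hmin
  rw [← hb, hαβ hg' hg]
  exact Nat.le_add_left g b

theorem length_le_of_cfDerivesIn (hE : RectangleFree (G.yields [Sum.inl G.start])) {M : ℕ}
    (hM : ∀ r ∈ G.rules, sInf (G.yields r.2.1) ≤ M) (n : ℕ) :
    ∀ (A : N) (c : ℕ) (w : List T), G.Embeds G.start A c →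
      G.CFDerivesIn n [Sum.inl A] (w.map Sum.inr) → w.length ≤ ((G.reach A).ncard + 1) * M := by
  induction n using Nat.strong_induction_on with
  | _ n ih =>
  intro A c w hA hd
  obtain _ | n := n
  · have : Sum.inl A ∈ w.map Sum.inr := by simp [← show [Sum.inl A] = _ from hd]
    simp at this
  obtain ⟨x, P, F, hr, hx⟩ := hd.of_singleton
  have hwx : w.length ∈ G.yields x := ⟨w, rfl, cfDerives_iff_exists_cfDerivesIn.2 ⟨n, hx⟩⟩
  have hxM : sInf (G.yields x) ≤ M := hM _ hr
  by_cases hpump : ∃ σ ∈ x, (G.yields [σ]).Nontrivial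
  · obtain ⟨σ, hσx, hσ⟩ := hpump
    obtain ⟨α, β, rfl⟩ := List.append_of_mem hσx
    obtain ⟨B, rfl⟩ := exists_eq_inl_of_nontrivial hσ
    obtain ⟨k, v, g, hk, hv, hg, hw⟩ := hx.split_cons_map_inr
    have hrigid := subsingleton_yields_of_nontrivial (s := α) (t := β) hE hA
      (.single ⟨A, _, P, F, [], [], hr, rfl, by simp⟩) hσ
    have hgM : g ≤ M := (le_sInf_yields_of_subsingleton hrigid hg ⟨_, hwx⟩).trans hxM
    have hAB : G.Embeds A B g := .of_mem_rules hr hg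
    have hB := ih k (by omega) B (c + g) v (hA.trans hAB) hv
    have hle : (G.reach B).ncard ≤ (G.reach A).ncard :=
      Set.ncard_le_ncard (reach_subset_of_embeds hAB) (reach_finite A)
    rcases Nat.eq_zero_or_pos g with rfl | hg0
    · rw [hw, zero_add]
      exact hB.trans (Nat.mul_le_mul_right M (by omega))
    · have hlt := ncard_reach_lt hE hA ⟨_, hr, rfl⟩
        ⟨w, rfl, cfDerives_iff_exists_cfDerivesIn.2 ⟨n + 1, hd⟩⟩ hAB hg0
      nlinarith
  · simp only [not_exists, not_and, Set.not_nontrivial_iff] at hpump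
    have hsub := subsingleton_yields_of_forall hpump
    rw [hsub.eq_singleton_of_mem hwx, csInf_singleton] at hxM
    exact hxM.trans (Nat.le_mul_of_pos_left M (by omega))

theorem bddAbove_yields_start (hE : RectangleFree (G.yields [Sum.inl G.start])) :
    BddAbove (G.yields [Sum.inl G.start]) := by
  obtain ⟨M, hM⟩ := (G.fin.image fun r => sInf (G.yields r.2.1)).bddAbove
  refine ⟨((G.reach G.start).ncard + 1) * M, ?_⟩
  rintro _ ⟨w, rfl, h⟩
  obtain ⟨n, hn⟩ := cfDerives_iff_exists_cfDerivesIn.1 h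
  exact length_le_of_cfDerivesIn hE (fun r hr => hM ⟨r, hr, rfl⟩) n _ 0 w (.refl _) hn

end RCG

theorem notMem_cfFam_of_rectangleFree {T : Type} {L : Set (List T)}
    (hL : RectangleFree (List.length '' L)) (hunb : ¬ BddAbove (List.length '' L)) :
    L ∉ CFfam T := by
  rintro ⟨N, G, hG, rfl⟩
  have : List.length '' G.Lang false = G.yields [Sum.inl G.start] := by
    ext m
    simp [RCG.Lang, RCG.yields, RCG.step_eq_cfStep hG, and_comm]
  rw [this] at hL hunb
  exact hunb (RCG.bddAbove_yields_start hL)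

theorem cfFam_subset_sc11 (T : Type) : CFfam T ⊆ SC11 T := by
  rintro L ⟨N, G, hG, rfl⟩
  refine ⟨N, G.toSCG, ?_⟩
  simp only [SCG.Lang, RCG.Lang, RCG.toSCG_step, RCG.step_eq_cfStep hG]
  rfl

namespace PowGrammar

inductive NT | S | P₁ | P₂ | F | A | B
  deriving DecidableEq

abbrev nt (X : NT) : Symb NT Unit := Sum.inl X

abbrev a : Symb NT Unit := Sum.inr ()

def rules : Set (NT × List (Symb NT Unit) × Set (Symb NT Unit) × Set (Symb NT Unit)) :=
  {(.S, [nt .P₂, nt .B, nt .B], ∅, ∅),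
   (.A, [nt .B, nt .B], {nt .P₁}, ∅),
   (.P₁, [nt .P₂], ∅, {nt .A}),
   (.B, [nt .A], {nt .P₂}, ∅),
   (.P₂, [nt .P₁], ∅, {nt .B}),
   (.P₂, [nt .F], ∅, {nt .B}),
   (.A, [a], {nt .F}, ∅),
   (.F, [a], ∅, {nt .A})}

def G : SCG NT Unit where
  rules := rules
  fin := by simp [rules]
  ne := by simp [rules]
  per1 := by simp [rules]
  for1 := by simp [rules]
  start := .S

/- Invariant of the sentential forms after the first step, in terms of their symbol counts:
under `P₂` there are `2 ^ k` symbols `A` and `B`, and under `P₁` an `A` counts as the `B B` it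
becomes. Counts are taken in `Multiset`, as `List.count` would use the derived `BEq` on `Sum`, which has no
`LawfulBEq` instance. -/
def Inv (k : ℕ) (s : Multiset (Symb NT Unit)) : Prop :=
  s.count (nt .S) = 0 ∧ s.count (nt .P₁) + s.count (nt .P₂) + s.count (nt .F) ≤ 1 ∧
  (s.count (nt .P₁) = 1 → s.count a = 0 ∧ 2 * s.count (nt .A) + s.count (nt .B) = 2 ^ (k + 1)) ∧
  (s.count (nt .P₂) = 1 → s.count a = 0 ∧ s.count (nt .A) + s.count (nt .B) = 2 ^ k) ∧
  (s.count (nt .F) = 1 → s.count (nt .B) = 0 ∧ s.count (nt .A) + s.count a = 2 ^ k) ∧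
  (s.count (nt .P₁) + s.count (nt .P₂) + s.count (nt .F) = 0 →
    s.count (nt .A) + s.count (nt .B) = 0 ∧ s.count a = 2 ^ k + 1)

theorem count_step (σ : Symb NT Unit) (X : NT) (x u v : List (Symb NT Unit)) :
    Multiset.count σ ↑(u ++ x ++ v) + Multiset.count σ {nt X} =
      Multiset.count σ ↑(u ++ nt X :: v) + Multiset.count σ ↑x := by
  simp only [← Multiset.coe_add, ← Multiset.cons_coe, Multiset.count_add, Multiset.count_cons,
    Multiset.count_singleton]
  omega

theorem inv_step {k : ℕ} {s t : List (Symb NT Unit)} (h : G.Step true s t) (hs : Inv k s) :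
    Inv k t ∨ Inv (k + 1) t := by
  obtain ⟨X, x, Per, For, u, v, hr, rfl, rfl, hPer, hFor⟩ := h
  have hc := fun σ => count_step σ X x u v
  simp only [alph, if_true, Set.subset_def, Set.mem_ofPred_eq, ← Multiset.mem_coe,
    ← Multiset.count_pos] at hPer hFor
  generalize ((u ++ nt X :: v : List (Symb NT Unit)) : Multiset (Symb NT Unit)) = S
    at hs hc hPer hFor
  generalize ((u ++ x ++ v : List (Symb NT Unit)) : Multiset (Symb NT Unit)) = T at hc ⊢
  have hS := hc (nt .S)
  have hP₁ := hc (nt .P₁)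
  have hP₂ := hc (nt .P₂)
  have hF := hc (nt .F)
  have hA := hc (nt .A)
  have hB := hc (nt .B)
  have ha := hc a
  clear hc
  simp only [Inv, pow_succ] at hs ⊢
  simp only [G, rules, Set.mem_insert_iff, Set.mem_singleton_iff, Prod.mk.injEq] at hr
  rcases hr with ⟨rfl, rfl, rfl, rfl⟩ | ⟨rfl, rfl, rfl, rfl⟩ | ⟨rfl, rfl, rfl, rfl⟩ |
    ⟨rfl, rfl, rfl, rfl⟩ | ⟨rfl, rfl, rfl, rfl⟩ | ⟨rfl, rfl, rfl, rfl⟩ | ⟨rfl, rfl, rfl, rfl⟩ |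
    ⟨rfl, rfl, rfl, rfl⟩ <;>
  simp [-Multiset.count_eq_zero] at hPer hFor hS hP₁ hP₂ hF hA hB ha
  -- the start rule no longer applies, and only `P₁ → P₂` begins a new round
  · omega
  · exact .inl (by omega)
  · exact .inr (by omega)
  all_goals exact .inl (by omega)

theorem inv_of_step_start {t : List (Symb NT Unit)} (h : G.Step true [nt .S] t) : Inv 1 t := by
  obtain ⟨X, x, Per, For, u, v, hr, hs, rfl, -, -⟩ := h
  obtain ⟨rfl, rfl, rfl⟩ : u = [] ∧ X = .S ∧ v = [] := by
    rcases u with _ | ⟨_, _ | _⟩ <;> simp_all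
  simp only [G, rules, Set.mem_insert_iff, Set.mem_singleton_iff, Prod.mk.injEq] at hr
  obtain ⟨-, rfl, -⟩ := hr.resolve_right (by simp)
  simp [Inv]

theorem inv_of_reflTransGen {k : ℕ} {s t : List (Symb NT Unit)} (hs : Inv k s)
    (h : Relation.ReflTransGen (G.Step true) s t) : ∃ k', k ≤ k' ∧ Inv k' t := by
  induction h with
  | refl => exact ⟨k, le_rfl, hs⟩
  | tail _ hstep ih =>
    obtain ⟨k', hk', hinv⟩ := ih
    rcases inv_step hstep hinv with h | h
    exacts [⟨k', hk', h⟩, ⟨k' + 1, by omega, h⟩]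

theorem length_mem_of_derives {w : List Unit}
    (h : Relation.ReflTransGen (G.Step true) [nt .S] (w.map Sum.inr)) :
    ∃ n, 1 ≤ n ∧ w.length = 2 ^ n + 1 := by
  rcases h.cases_head with h | ⟨t, ht, hd⟩
  · cases w <;> simp_all
  obtain ⟨k, hk, hinv⟩ := inv_of_reflTransGen (inv_of_step_start ht) hd
  have hw : w.map Sum.inr = List.replicate w.length a := by simp [List.eq_replicate_iff]
  simp [Inv, hw] at hinv
  exact ⟨k, hk, hinv⟩

def form (m : NT) (i j k : ℕ) : List (Symb NT Unit) :=
  nt m :: (List.replicate i (nt .A) ++ List.replicate j (nt .B) ++ List.replicate k a)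

theorem step_double (i j : ℕ) : G.Step true (form .P₁ (i + 1) j 0) (form .P₁ i (j + 2) 0) :=
  ⟨.A, [nt .B, nt .B], {nt .P₁}, ∅, nt .P₁ :: List.replicate i (nt .A), List.replicate j (nt .B),
    by simp [G, rules], by simp [form, List.replicate_succ'], by simp [form, List.replicate_succ],
    by simp [alph, form], by simp⟩

theorem step_to_convert (j : ℕ) : G.Step true (form .P₁ 0 j 0) (form .P₂ 0 j 0) :=
  ⟨.P₁, [nt .P₂], ∅, {nt .A}, [], List.replicate j (nt .B), by simp [G, rules], by simp [form],
    by simp [form], by simp, by simp [alph, form, List.mem_replicate]⟩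

theorem step_convert (i j : ℕ) : G.Step true (form .P₂ i (j + 1) 0) (form .P₂ (i + 1) j 0) :=
  ⟨.B, [nt .A], {nt .P₂}, ∅, nt .P₂ :: List.replicate i (nt .A), List.replicate j (nt .B),
    by simp [G, rules], by simp [form, List.replicate_succ], by simp [form, List.replicate_succ'],
    by simp [alph, form], by simp⟩

theorem step_to_double (i : ℕ) : G.Step true (form .P₂ i 0 0) (form .P₁ i 0 0) :=
  ⟨.P₂, [nt .P₁], ∅, {nt .B}, [], List.replicate i (nt .A), by simp [G, rules], by simp [form],
    by simp [form], by simp, by simp [alph, form, List.mem_replicate]⟩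

theorem step_to_finish (i : ℕ) : G.Step true (form .P₂ i 0 0) (form .F i 0 0) :=
  ⟨.P₂, [nt .F], ∅, {nt .B}, [], List.replicate i (nt .A), by simp [G, rules], by simp [form],
    by simp [form], by simp, by simp [alph, form, List.mem_replicate]⟩

theorem step_finish (i k : ℕ) : G.Step true (form .F (i + 1) 0 k) (form .F i 0 (k + 1)) :=
  ⟨.A, [a], {nt .F}, ∅, nt .F :: List.replicate i (nt .A), List.replicate k a,
    by simp [G, rules], by simp [form, List.replicate_succ'], by simp [form, List.replicate_succ],
    by simp [alph, form], by simp⟩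

theorem step_last (k : ℕ) : G.Step true (form .F 0 0 k) (List.replicate (k + 1) a) :=
  ⟨.F, [a], ∅, {nt .A}, [], List.replicate k a, by simp [G, rules], by simp [form],
    by simp [List.replicate_succ], by simp, by simp [alph, form, List.mem_replicate]⟩

theorem derives_double (i : ℕ) :
    Relation.ReflTransGen (G.Step true) (form .P₂ i 0 0) (form .P₂ (2 * i) 0 0) := by
  refine .head (step_to_double i) ?_
  have h₁ := reflTransGen_of_transfer (fun i j => form .P₁ i j 0) 2 step_double i 0
  have h₂ := reflTransGen_of_transfer (fun j i => form .P₂ i j 0) 1 (fun j i => step_convert i j)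
    (2 * i) 0
  simp only [zero_add, one_mul] at h₁ h₂
  exact h₁.trans (.head (step_to_convert _) h₂)

theorem derives_pow (n : ℕ) :
    Relation.ReflTransGen (G.Step true) [nt .S] (form .P₂ (2 ^ (n + 1)) 0 0) := by
  induction n with
  | zero =>
    have h := reflTransGen_of_transfer (fun j i => form .P₂ i j 0) 1 (fun j i => step_convert i j)
      2 0
    refine .head ?_ h
    exact ⟨.S, [nt .P₂, nt .B, nt .B], ∅, ∅, [], [], by simp [G, rules], rfl, rfl, by simp,
      by simp⟩
  | succ n ih => simpa [pow_succ, mul_comm] using ih.trans (derives_double _)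

theorem derives_finish (i : ℕ) :
    Relation.ReflTransGen (G.Step true) (form .P₂ i 0 0) (List.replicate (i + 1) a) := by
  have h := reflTransGen_of_transfer (fun i k => form .F i 0 k) 1 step_finish i 0
  simp only [zero_add, one_mul] at h
  exact .head (step_to_finish i) (h.tail (step_last i))

theorem lang_eq : G.Lang true = {w | ∃ n, 1 ≤ n ∧ w.length = 2 ^ n + 1} := by
  ext w
  refine ⟨length_mem_of_derives, ?_⟩
  rintro ⟨_ | n, hn, hw⟩
  · omega
  have : w.map Sum.inr = List.replicate (2 ^ (n + 1) + 1) a := by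
    simp [List.eq_replicate_iff, hw]
  show Relation.ReflTransGen _ _ _
  rw [this]
  exact (derives_pow n).trans (derives_finish _)

end PowGrammar

/-- CF ⊊ SC(1,1): every (nonerasing) context-free language is in
SC(1,1), and some SC(1,1) language is not context-free. -/
theorem cf_proper_subset_sc11 :
    (∀ T : Type, CFfam T ⊆ SC11 T) ∧
    (∃ (T : Type) (L : Set (List T)), L ∈ SC11 T ∧ L ∉ CFfam T) := by
  refine ⟨cfFam_subset_sc11, Unit, {w | ∃ n, 1 ≤ n ∧ w.length = 2 ^ n + 1},
    ⟨_, _, PowGrammar.lang_eq⟩, notMem_cfFam_of_rectangleFree ?_ ?_⟩ <;>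
    rw [image_length_setOf fun m => ∃ n, 1 ≤ n ∧ m = 2 ^ n + 1]
  exacts [rectangleFree_two_pow_add_one, not_bddAbove_two_pow_add_one]
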